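/- Let n be a positive natural number and let T : (Fin n → ℝ) → ℝ be a location equivariant estimator, i.e., T(X + c) = T(X) + c for every sample X : Fin n → ℝ and every constant c ∈ ℝ (where X + c denotes the sample with c added to every coordinate). Then the finite-sample replacement breakdown point of T at any sample X is at most ⌈(n+1)/2⌉/n; in particular, there exists m ≤ ⌈(n+1)/2⌉ such that the supremum over all samples Y differing from X in at most m coordinates of |T(Y) - T(X)| is infinite (i.e., unbounded: for every M > 0 there is such a Y with |T(Y) - T(X)| > M). -/

import Mathlib

/-!
Shifting a sample `X` by `c` on a set `s` of coordinates gives a sample `Z` that differs from `X`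
only on `s`, while `Z - c` differs from `X` only on the complement of `s`. Equivariance forces
`T Z - T (Z - c) = c`, so one of the two contaminated samples moves `T` by at least `c / 2`.
Splitting the `n` coordinates into two halves of size at most `⌈(n + 1) / 2⌉` and letting `c → ∞`
gives breakdown.
-/

open Finset

def IsLocationEquivariant {ι : Type*} (T : (ι → ℝ) → ℝ) : Prop :=
  ∀ (X : ι → ℝ) (c : ℝ), T (fun i => X i + c) = T X + c

theorem IsLocationEquivariant.exists_eqOn_and_lt_abs_sub {ι : Type*} {T : (ι → ℝ) → ℝ}
    (hT : IsLocationEquivariant T) (X : ι → ℝ) (s : Set ι) (M : ℝ) :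
    ∃ Y : ι → ℝ, (Set.EqOn Y X sᶜ ∨ Set.EqOn Y X s) ∧ M < |T Y - T X| := by
  set c : ℝ := 2 * |M| + 1
  set Z : ι → ℝ := fun i => X i + s.indicator (fun _ => c) i
  have hZ : Set.EqOn Z X sᶜ := fun i hi => by simp [Z, Set.indicator_of_notMem hi]
  have hZc : Set.EqOn (fun i => Z i + -c) X s := fun i hi => by
    simp [Z, Set.indicator_of_mem hi]
  have hgap : T Z - T (fun i => Z i + -c) = c := by rw [hT]; ring
  by_contra! hsmall
  have h₁ := hsmall Z (Or.inl hZ)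
  have h₂ := hsmall _ (Or.inr hZc)
  have := abs_sub_le (T Z) (T X) (T fun i => Z i + -c)
  rw [hgap, abs_of_pos (by positivity), abs_sub_comm (T X)] at this
  linarith [le_abs_self M]

theorem card_filter_ne_le_of_eqOn_compl {ι : Type*} [Fintype ι] {Y X : ι → ℝ} {s : Finset ι}
    (h : Set.EqOn Y X (↑s)ᶜ) : #{i | Y i ≠ X i} ≤ #s :=
  card_le_card fun _ hi => by_contra fun his => (mem_filter.1 hi).2 (h his)

theorem exists_card_le_and_card_compl_le {ι : Type*} [Fintype ι] [DecidableEq ι] {m : ℕ}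
    (h : Fintype.card ι ≤ 2 * m) : ∃ s : Finset ι, #s ≤ m ∧ #sᶜ ≤ m := by
  obtain ⟨s, -, hs⟩ :=
    exists_subset_card_eq (show min m (Fintype.card ι) ≤ #(univ : Finset ι) by simp)
  refine ⟨s, by omega, ?_⟩
  rw [card_compl]
  omega

theorem location_equivariant_breakdown_at_most_half_general
    (n : ℕ) (T : (Fin n → ℝ) → ℝ)
    (hequiv : ∀ (X : Fin n → ℝ) (c : ℝ), T (fun i => X i + c) = T X + c) :
    ∀ X : Fin n → ℝ, ∃ m : ℕ, m ≤ ⌈((n : ℝ) + 1) / 2⌉₊ ∧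
      ∀ M : ℝ, 0 < M → ∃ Y : Fin n → ℝ,
        (Finset.univ.filter (fun i => Y i ≠ X i)).card ≤ m ∧
        M < |T Y - T X| := by
  intro X
  set m := ⌈((n : ℝ) + 1) / 2⌉₊
  have hnm : Fintype.card (Fin n) ≤ 2 * m := by
    have : ((n : ℝ) + 1) / 2 ≤ m := Nat.le_ceil _
    rw [Fintype.card_fin]
    exact_mod_cast (by linarith : (n : ℝ) ≤ 2 * m)
  obtain ⟨s, hs, hsc⟩ := exists_card_le_and_card_compl_le hnm
  refine ⟨m, le_rfl, fun M _ => ?_⟩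
  obtain ⟨Y, hY, hMY⟩ := IsLocationEquivariant.exists_eqOn_and_lt_abs_sub hequiv X s M
  refine ⟨Y, ?_, hMY⟩
  rcases hY with hY | hY
  · exact (card_filter_ne_le_of_eqOn_compl hY).trans hs
  · exact (card_filter_ne_le_of_eqOn_compl (s := sᶜ) (by simpa using hY)).trans hsc

/-- A location equivariant estimator `T` has finite-sample replacement
breakdown point at most `⌈(n+1)/2⌉ / n` at every sample `X`: there is some
`m ≤ ⌈(n+1)/2⌉` such that the supremum of `|T Y - T X|` over samples `Y` differing
from `X` in at most `m` coordinates is infinite, i.e. for every `M > 0` there is such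
a `Y` with `|T Y - T X| > M`. -/
theorem location_equivariant_breakdown_at_most_half
    (n : ℕ) (hn : 0 < n) (T : (Fin n → ℝ) → ℝ)
    (hequiv : ∀ (X : Fin n → ℝ) (c : ℝ), T (fun i => X i + c) = T X + c) :
    ∀ X : Fin n → ℝ, ∃ m : ℕ, m ≤ ⌈((n : ℝ) + 1) / 2⌉₊ ∧
      ∀ M : ℝ, 0 < M → ∃ Y : Fin n → ℝ,
        (Finset.univ.filter (fun i => Y i ≠ X i)).card ≤ m ∧
        M < |T Y - T X| :=
  location_equivariant_breakdown_at_most_half_general n T hequiv
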